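/- Let R be a Frobenius algebra over a field k and S a simple left R-module. Then Hom_R(S, R) is nonzero; in fact, as a right vector space over End_R(S), it has dimension equal to dim_{End_R(S)} S. In particular S embeds into R as a left ideal. -/

import Mathlib

set_option linter.unusedVariables false

universe u

/-- A linear functional `φ : R → k` is a Frobenius form if the associated bilinear form
`(a, b) ↦ φ (a * b)` is nondegenerate on both sides. -/
def IsFrobeniusForm (k : Type*) {R : Type*} [Field k] [Ring R] [Algebra k R]
    (φ : R →ₗ[k] k) : Prop :=
  (∀ a : R, a ≠ 0 → ∃ b : R, φ (a * b) ≠ 0) ∧ (∀ a : R, a ≠ 0 → ∃ b : R, φ (b * a) ≠ 0)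

section

variable {R S : Type*} [Ring R] [AddCommGroup S] [Module R S]

/-- The endomorphism ring of `S` acts on `Hom_R(S, R)` on the right, by precomposition. -/
instance : SMul (Module.End R S)ᵐᵒᵖ (S →ₗ[R] R) :=
  ⟨fun e f => f ∘ₗ e.unop⟩

lemma endOp_smul_def (e : (Module.End R S)ᵐᵒᵖ) (f : S →ₗ[R] R) : e • f = f ∘ₗ e.unop := rfl

/-- `Hom_R(S, R)` is a right module over `End_R(S)`, i.e. a left module over the opposite
ring, via precomposition. -/
instance : Module (Module.End R S)ᵐᵒᵖ (S →ₗ[R] R) where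
  one_smul f := LinearMap.ext fun _ => rfl
  mul_smul a b f := LinearMap.ext fun _ => rfl
  smul_zero e := LinearMap.ext fun _ => rfl
  smul_add e f g := LinearMap.ext fun _ => rfl
  add_smul a b f := LinearMap.ext fun x => f.map_add _ _
  zero_smul f := LinearMap.ext fun x => f.map_zero

end

/-- If `R` is a Frobenius algebra over `k` and `S` is a simple left `R`-module, then
`Hom_R(S, R)` is nonzero, its dimension as a right `End_R(S)`-vector space equals
`dim_{End_R(S)} S`, and `S` embeds into `R` as a left ideal. -/
theorem simple_hom_into_frobenius
    {k : Type*} {R S : Type u} [Field k] [Ring R] [Algebra k R] [FiniteDimensional k R]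
    (hF : ∃ φ : R →ₗ[k] k, IsFrobeniusForm k φ)
    [AddCommGroup S] [Module R S] [IsSimpleModule R S] :
    (∃ f : S →ₗ[R] R, f ≠ 0) ∧
    Module.rank (Module.End R S)ᵐᵒᵖ (S →ₗ[R] R) = Module.rank (Module.End R S) S ∧
    ∃ f : S →ₗ[R] R, Function.Injective f := by
  classical
  obtain ⟨φ, hφ1, hφ2⟩ := hF
  -- `k`-module structure on `S` via the algebra map
  letI : Module k S := Module.compHom S (algebraMap k R)
  have ksmul_def : ∀ (c : k) (s : S), c • s = (algebraMap k R c) • s := fun _ _ => rfl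
  haveI : IsScalarTower k R S :=
    ⟨fun c r s => by rw [Algebra.smul_def, ksmul_def, mul_smul]⟩
  haveI : SMulCommClass R k S :=
    ⟨fun r c s => by
      rw [ksmul_def, ksmul_def, ← mul_smul, ← mul_smul, Algebra.commutes]⟩
  -- `S` is nontrivial and finite dimensional over `k`
  haveI : Nontrivial S := IsSimpleModule.nontrivial R S
  obtain ⟨s₀, hs₀⟩ := exists_ne (0 : S)
  have hsurj : Function.Surjective (LinearMap.toSpanSingleton R S s₀) := by
    rw [← LinearMap.range_eq_top]
    rcases eq_bot_or_eq_top (LinearMap.range (LinearMap.toSpanSingleton R S s₀)) with h | h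
    · exfalso
      apply hs₀
      have : (LinearMap.toSpanSingleton R S s₀) 1 ∈
          LinearMap.range (LinearMap.toSpanSingleton R S s₀) := LinearMap.mem_range_self _ 1
      rw [h] at this
      simpa [LinearMap.toSpanSingleton_apply] using this
    · exact h
  haveI : Module.Finite R S := Module.Finite.of_surjective _ hsurj
  haveI : Module.Finite k S := Module.Finite.trans R S
  -- the evaluation map `R → Dual k R`, `a ↦ (b ↦ φ (b * a))`
  let ev : R →ₗ[k] (R →ₗ[k] k) :=
    { toFun := fun a => φ ∘ₗ LinearMap.mulRight k a
      map_add' := fun a a' => by ext b; simp [mul_add]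
      map_smul' := fun c a => by ext b; simp [mul_smul_comm] }
  have ev_apply : ∀ a b : R, ev a b = φ (b * a) := fun _ _ => rfl
  have ev_inj : Function.Injective ev := by
    intro a a' h
    by_contra hne
    obtain ⟨b, hb⟩ := hφ2 (a - a') (sub_ne_zero.mpr hne)
    apply hb
    have : ev (a - a') b = 0 := by rw [map_sub, h, sub_self]; rfl
    rw [ev_apply] at this
    rwa [mul_sub] at this ⊢
  have ev_surj : Function.Surjective ev :=
    (LinearMap.injective_iff_surjective_of_finrank_eq_finrank
      (Subspace.dual_finrank_eq (V := R)).symm).mp ev_inj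
  let E : R ≃ₗ[k] (R →ₗ[k] k) := LinearEquiv.ofBijective ev ⟨ev_inj, ev_surj⟩
  -- the comparison map `Hom_R(S, R) → Hom_k(S, k)`
  let T : (S →ₗ[R] R) → (S →ₗ[k] k) := fun f => φ ∘ₗ (f.restrictScalars k)
  have T_apply : ∀ (f : S →ₗ[R] R) (s : S), T f s = φ (f s) := fun _ _ => rfl
  have T_inj : ∀ f : S →ₗ[R] R, T f = 0 → f = 0 := by
    intro f hf
    by_contra hne
    obtain ⟨s, hs⟩ : ∃ s, f s ≠ 0 := by
      by_contra h
      push_neg at h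
      exact hne (LinearMap.ext fun s => by rw [h s]; rfl)
    obtain ⟨b, hb⟩ := hφ2 (f s) hs
    apply hb
    have : T f (b • s) = 0 := by rw [hf]; rfl
    rw [T_apply, map_smul, smul_eq_mul] at this
    exact this
  have T_surj : ∀ h : S →ₗ[k] k, ∃ f : S →ₗ[R] R, T f = h := by
    intro h
    let α : S → (R →ₗ[k] k) := fun s =>
      h ∘ₗ ((LinearMap.toSpanSingleton R S s).restrictScalars k)
    have α_apply : ∀ (s : S) (b : R), α s b = h (b • s) := fun _ _ => rfl
    refine ⟨{ toFun := fun s => E.symm (α s)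
              map_add' := ?_
              map_smul' := ?_ }, ?_⟩
    · intro s t
      show E.symm (α (s + t)) = E.symm (α s) + E.symm (α t)
      have hα : α (s + t) = α s + α t := by
        ext b
        simp only [α_apply, LinearMap.add_apply, smul_add, map_add]
      rw [hα, map_add]
    · intro r s
      show E.symm (α (r • s)) = r • E.symm (α s)
      apply E.injective
      rw [E.apply_symm_apply]
      ext b
      have : E (r • E.symm (α s)) b = ev (r * E.symm (α s)) b := by
        rw [smul_eq_mul]; rfl
      rw [this, ev_apply, α_apply, ← mul_assoc]
      have : φ (b * r * E.symm (α s)) = ev (E.symm (α s)) (b * r) := rfl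
      rw [this]
      have hE : ev (E.symm (α s)) = α s := E.apply_symm_apply (α s)
      rw [hE, α_apply, mul_smul]
    · ext s
      show φ (E.symm (α s)) = h s
      have h2 : φ (E.symm (α s)) = ev (E.symm (α s)) 1 := by
        rw [ev_apply, one_mul]
      have hE : ev (E.symm (α s)) = α s := E.apply_symm_apply (α s)
      rw [h2, hE, α_apply, one_smul]
  -- nonzero element of the dual of `S`
  haveI : FiniteDimensional k (S →ₗ[k] k) := by infer_instance
  have hdual_rank : Module.finrank k (S →ₗ[k] k) = Module.finrank k S :=
    Subspace.dual_finrank_eq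
  haveI : Nontrivial (S →ₗ[k] k) := by
    apply Module.nontrivial_of_finrank_pos (R := k)
    rw [hdual_rank]; exact Module.finrank_pos
  obtain ⟨h₀, hh₀⟩ := exists_ne (0 : S →ₗ[k] k)
  obtain ⟨f₀, hf₀⟩ := T_surj h₀
  have hf₀ne : f₀ ≠ 0 := by
    rintro rfl
    apply hh₀
    rw [← hf₀]
    ext s
    show φ ((0 : S →ₗ[R] R) s) = 0
    simp
  have hinj : ∀ f : S →ₗ[R] R, f ≠ 0 → Function.Injective f := by
    intro f hf
    rw [← LinearMap.ker_eq_bot]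
    rcases eq_bot_or_eq_top (LinearMap.ker f) with h | h
    · exact h
    · exact absurd (LinearMap.ext fun s => by
        have : s ∈ LinearMap.ker f := h ▸ Submodule.mem_top
        simpa using this) hf
  refine ⟨⟨f₀, hf₀ne⟩, ?_, ⟨f₀, hinj f₀ hf₀ne⟩⟩
  -- the dimension count
  set D := Module.End R S with hD
  -- `D` is a division ring and finite dimensional over `k`
  haveI : FiniteDimensional k (S →ₗ[k] S) := by infer_instance
  haveI : FiniteDimensional k D :=
    FiniteDimensional.of_injective
      (LinearMap.restrictScalarsₗ k R S S k : (S →ₗ[R] S) →ₗ[k] (S →ₗ[k] S))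
      (LinearMap.restrictScalars_injective k)
  haveI : IsScalarTower k D S := Module.End.apply_isScalarTower
  haveI : Module.Finite D S := Module.Finite.of_restrictScalars_finite k D S
  -- `Dᵐᵒᵖ`-module structure on `Hom_k(S, k)` by precomposition
  letI : SMul Dᵐᵒᵖ (S →ₗ[k] k) := ⟨fun e g => g ∘ₗ (e.unop.restrictScalars k)⟩
  have op_smul_def : ∀ (e : Dᵐᵒᵖ) (g : S →ₗ[k] k) (s : S),
      (e • g) s = g (e.unop s) := fun _ _ _ => rfl
  letI : Module Dᵐᵒᵖ (S →ₗ[k] k) :=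
    { one_smul := fun g => LinearMap.ext fun _ => rfl
      mul_smul := fun a b g => LinearMap.ext fun _ => rfl
      smul_zero := fun e => LinearMap.ext fun _ => rfl
      smul_add := fun e g g' => LinearMap.ext fun _ => rfl
      add_smul := fun a b g => LinearMap.ext fun s => g.map_add _ _
      zero_smul := fun g => LinearMap.ext fun s => g.map_zero }
  haveI : IsScalarTower k Dᵐᵒᵖ (S →ₗ[k] k) := ⟨fun c e g => by
    ext s
    rw [op_smul_def, MulOpposite.unop_smul, LinearMap.smul_apply, map_smul,
      LinearMap.smul_apply, op_smul_def]⟩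
  -- the `Dᵐᵒᵖ`-linear comparison equivalence
  let Tl : (S →ₗ[R] R) →ₗ[Dᵐᵒᵖ] (S →ₗ[k] k) :=
    { toFun := T
      map_add' := fun f g => LinearMap.ext fun s => by
        show φ ((f + g) s) = φ (f s) + φ (g s)
        rw [LinearMap.add_apply, map_add]
      map_smul' := fun e f => LinearMap.ext fun s => rfl }
  have Tl_bij : Function.Bijective Tl := by
    constructor
    · intro f g hfg
      have : Tl (f - g) = 0 := by rw [map_sub, hfg, sub_self]
      have := T_inj (f - g) this
      exact sub_eq_zero.mp this
    · exact T_surj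
  let Teq : (S →ₗ[R] R) ≃ₗ[Dᵐᵒᵖ] (S →ₗ[k] k) := LinearEquiv.ofBijective Tl Tl_bij
  haveI : Module.Finite Dᵐᵒᵖ (S →ₗ[k] k) :=
    Module.Finite.of_restrictScalars_finite k Dᵐᵒᵖ (S →ₗ[k] k)
  haveI : Module.Finite Dᵐᵒᵖ (S →ₗ[R] R) := Module.Finite.equiv Teq.symm
  -- dimension bookkeeping
  haveI : Nontrivial D := ⟨0, 1, fun h => by
    have := IsSimpleModule.nontrivial R S
    obtain ⟨s, hs⟩ := exists_ne (0 : S)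
    apply hs
    have := LinearMap.congr_fun h.symm s
    simpa using this⟩
  have hDop : Module.finrank k Dᵐᵒᵖ = Module.finrank k D :=
    (MulOpposite.opLinearEquiv k (M := D)).symm.finrank_eq
  have hDpos : 0 < Module.finrank k D := Module.finrank_pos
  have h1 : Module.finrank k D * Module.finrank D S = Module.finrank k S :=
    Module.finrank_mul_finrank k D S
  have h2 : Module.finrank k Dᵐᵒᵖ * Module.finrank Dᵐᵒᵖ (S →ₗ[k] k)
      = Module.finrank k (S →ₗ[k] k) :=
    Module.finrank_mul_finrank k Dᵐᵒᵖ (S →ₗ[k] k)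
  have hfin : Module.finrank Dᵐᵒᵖ (S →ₗ[k] k) = Module.finrank D S := by
    apply Nat.eq_of_mul_eq_mul_left hDpos
    rw [h1, ← hDop, h2, hdual_rank]
  rw [← Module.finrank_eq_rank Dᵐᵒᵖ (S →ₗ[R] R), ← Module.finrank_eq_rank D S,
    Teq.finrank_eq, hfin]
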